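/- arXiv:1312.0150 — 2 statements merged into one kernel-verified Lean document; each statement's English description precedes it below -/
import Mathlib

section
/- Assume μ is quasi-definite. Then the left CMV matrix Laurent polynomials satisfy the five-term recursion relations: for every k ≥ 1 and z ∈ ℂ∖{0}, z·φ₁^{L,(2k)}(z) = −α^L_{1,2k+1}(I − (α^R_{2,2k})† α^L_{1,2k}) φ₁^{L,(2k−1)}(z) − α^L_{1,2k+1}(α^R_{2,2k})† φ₁^{L,(2k)}(z) − α^L_{1,2k+2} φ₁^{L,(2k+1)}(z) + φ₁^{L,(2k+2)}(z), and z·φ₁^{L,(2k+1)}(z) = (I − (α^R_{2,2k+1})† α^L_{1,2k+1})(I − (α^R_{2,2k})† α^L_{1,2k}) φ₁^{L,(2k−1)}(z) + (I − (α^R_{2,2k+1})† α^L_{1,2k+1})(α^R_{2,2k})† φ₁^{L,(2k)}(z) − (α^R_{2,2k+1})† α^L_{1,2k+2} φ₁^{L,(2k+1)}(z) + (α^R_{2,2k+1})† φ₁^{L,(2k+2)}(z). -/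
noncomputable section

open scoped Matrix
open Finset

namespace MOLPUC

/-- `m × m` complex matrices. -/
abbrev Mm (m : ℕ) := Matrix (Fin m) (Fin m) ℂ

/-- An `m × m` matrix measure on the unit circle `𝕋`, modelled entrywise by the
integration functionals `f ↦ ∫_𝕋 f dμ_{cd}`. -/
abbrev MatMeas (m : ℕ) := Fin m → Fin m → ((Circle → ℂ) →ₗ[ℂ] ℂ)

variable {m : ℕ}

/-- The matrix integral `∮_𝕋 f(z) dμ(z)/(iz) g(z)`, with `(a,b)` entry
`Σ_{c,d} ∫_𝕋 f_{ac}(z) g_{db}(z) (iz)⁻¹ dμ_{cd}(z)`. -/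
def mInt (μ : MatMeas m) (f g : ℂ → Mm m) : Mm m :=
  Matrix.of fun a b => ∑ c, ∑ d,
    μ c d (fun z => f (z : ℂ) a c * g (z : ℂ) d b / (Complex.I * (z : ℂ)))

/-- CMV exponents: `n_0 = 0`, `n_{2k-1} = -k`, `n_{2k} = k`. -/
def nexp (j : ℕ) : ℤ := if j % 2 = 1 then -(((j + 1) / 2 : ℕ) : ℤ) else ((j / 2 : ℕ) : ℤ)

/-- CMV ordered Laurent monomials `χ^{(j)}(z) = z^{n_j}`. -/
def chi (j : ℕ) (z : ℂ) : ℂ := z ^ nexp j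

/-- The Laurent monomial `z^n` times the identity matrix. -/
def zmon (n : ℤ) : ℂ → Mm m := fun z => z ^ n • (1 : Mm m)

/-- The moments `c_n = (1/2π) ∮_𝕋 z^{-n} dμ(z)/(iz)`. -/
def moment (μ : MatMeas m) (n : ℤ) : Mm m :=
  ((2 * Real.pi : ℝ) : ℂ)⁻¹ • mInt μ (zmon (-n)) (fun _ => (1 : Mm m))

/-- Blocks of the left CMV moment matrix: `(g^L)_{ij} = 2π c_{n_j - n_i}`. -/
def gL (μ : MatMeas m) (i j : ℕ) : Mm m :=
  ((2 * Real.pi : ℝ) : ℂ) • moment μ (nexp j - nexp i)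

/-- Blocks of the right CMV moment matrix: `(g^R)_{ij} = 2π c_{n_i - n_j}`. -/
def gR (μ : MatMeas m) (i j : ℕ) : Mm m :=
  ((2 * Real.pi : ℝ) : ℂ) • moment μ (nexp i - nexp j)

/-- The `ml × ml` leading principal truncation of a semi-infinite block matrix. -/
def trunc (g : ℕ → ℕ → Mm m) (l : ℕ) : Matrix (Fin l × Fin m) (Fin l × Fin m) ℂ :=
  Matrix.of fun p q => g p.1 q.1 p.2 q.2

/-- The `(i,j)`-th `m × m` block of the inverse of the truncated matrix. -/
def invBlk (g : ℕ → ℕ → Mm m) (l : ℕ) (i j : Fin l) : Mm m :=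
  Matrix.of fun a b => (trunc g l)⁻¹ (i, a) (j, b)

/-- Quasi-definiteness: all leading principal block truncations of both CMV moment
matrices are invertible. -/
def QuasiDefinite (μ : MatMeas m) : Prop :=
  ∀ l : ℕ, 1 ≤ l → IsUnit (trunc (gL μ) l) ∧ IsUnit (trunc (gR μ) l)

/-- The Schur complement `D^L_l`. -/
def DL (μ : MatMeas m) (l : ℕ) : Mm m :=
  gL μ l l - ∑ i : Fin l, ∑ j : Fin l, gL μ l i * invBlk (gL μ) l i j * gL μ j l

/-- The Schur complement `D^R_l`. -/
def DR (μ : MatMeas m) (l : ℕ) : Mm m :=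
  gR μ l l - ∑ i : Fin l, ∑ j : Fin l, gR μ l i * invBlk (gR μ) l i j * gR μ j l

/-- The quasi-norms `h^L_{2l} = D^L_{2l}`, `h^L_{2l+1} = D^R_{2l+1}`. -/
def hLn (μ : MatMeas m) (l : ℕ) : Mm m := if l % 2 = 0 then DL μ l else DR μ l

/-- The quasi-norms `h^R_{2l} = D^R_{2l}`, `h^R_{2l+1} = D^L_{2l+1}`. -/
def hRn (μ : MatMeas m) (l : ℕ) : Mm m := if l % 2 = 0 then DR μ l else DL μ l

/-- The CMV matrix Laurent polynomial `φ₁^{L,(l)}`. -/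
def phiL (μ : MatMeas m) (l : ℕ) (z : ℂ) : Mm m :=
  chi l z • (1 : Mm m) -
    ∑ i : Fin l, ∑ j : Fin l, chi j z • (gL μ l i * invBlk (gL μ) l i j)

/-- The CMV matrix Laurent polynomial `ψ^{L,(l)}`. -/
def psiL (μ : MatMeas m) (l : ℕ) (z : ℂ) : Mm m :=
  (chi l z⁻¹ • (1 : Mm m) -
    ∑ i : Fin l, ∑ j : Fin l, chi i z⁻¹ • (invBlk (gL μ) l i j * gL μ j l)) * (DL μ l)⁻¹

/-- The CMV matrix Laurent polynomial `φ₁^{R,(l)}`. -/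
def phiR (μ : MatMeas m) (l : ℕ) (z : ℂ) : Mm m :=
  (chi l z • (1 : Mm m) -
    ∑ i : Fin l, ∑ j : Fin l, chi i z • (invBlk (gR μ) l i j * gR μ j l)) * (DR μ l)⁻¹

/-- The CMV matrix Laurent polynomial `ψ^{R,(l)}`. -/
def psiR (μ : MatMeas m) (l : ℕ) (z : ℂ) : Mm m :=
  chi l z⁻¹ • (1 : Mm m) -
    ∑ i : Fin l, ∑ j : Fin l, chi j z⁻¹ • (gR μ l i * invBlk (gR μ) l i j)

/-- Evaluation of a matrix polynomial of degree `l` with coefficients `p`. -/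
def pev (p : ℕ → Mm m) (l : ℕ) (z : ℂ) : Mm m := ∑ j ∈ Finset.range (l + 1), z ^ j • p j

/-- The reversed polynomial `P*(z) = Σ_j (p_{l-j})† z^j`. -/
def pstar (p : ℕ → Mm m) (l : ℕ) (z : ℂ) : Mm m :=
  ∑ j ∈ Finset.range (l + 1), z ^ j • (p (l - j))ᴴ

/-- `p` is the coefficient family of a monic matrix polynomial of degree `l`. -/
def MonicDeg (p : ℕ → Mm m) (l : ℕ) : Prop := p l = 1 ∧ ∀ j, l < j → p j = 0

/-- `P l` is the coefficient family of the matrix Szegő polynomial `P^L_{1,l}`. -/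
def IsSzL1 (μ : MatMeas m) (P : ℕ → ℕ → Mm m) : Prop :=
  ∀ l, MonicDeg (P l) l ∧ ∀ j < l, mInt μ (pev (P l) l) (zmon (-(j : ℤ))) = 0

/-- `P l` is the coefficient family of the matrix Szegő polynomial `P^L_{2,l}`. -/
def IsSzL2 (μ : MatMeas m) (P : ℕ → ℕ → Mm m) : Prop :=
  ∀ l, MonicDeg (P l) l ∧
    ∀ j < l, mInt μ (zmon (j : ℤ)) (fun z => (pev (P l) l z)ᴴ) = 0

/-- `P l` is the coefficient family of the matrix Szegő polynomial `P^R_{1,l}`. -/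
def IsSzR1 (μ : MatMeas m) (P : ℕ → ℕ → Mm m) : Prop :=
  ∀ l, MonicDeg (P l) l ∧ ∀ j < l, mInt μ (zmon (-(j : ℤ))) (pev (P l) l) = 0

/-- `P l` is the coefficient family of the matrix Szegő polynomial `P^R_{2,l}`. -/
def IsSzR2 (μ : MatMeas m) (P : ℕ → ℕ → Mm m) : Prop :=
  ∀ l, MonicDeg (P l) l ∧
    ∀ j < l, mInt μ (fun z => (pev (P l) l z)ᴴ) (zmon (j : ℤ)) = 0

/-- The Verblunsky matrix of a matrix polynomial: its value at `0`. -/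
def verb (p : ℕ → Mm m) (l : ℕ) : Mm m := pev p l 0

/-- The Christoffel–Darboux kernel `k^{L,[l]}`. -/
def kL (μ : MatMeas m) (l : ℕ) (v u : ℂ) : Mm m :=
  ∑ j ∈ Finset.range l, psiL μ j v * phiL μ j u

/-- The Christoffel–Darboux kernel `k^{R,[l]}`. -/
def kR (μ : MatMeas m) (l : ℕ) (u v : ℂ) : Mm m :=
  ∑ j ∈ Finset.range l, phiR μ j u * psiR μ j v

/-- Pointwise multiplication by a fixed function, as a linear map. -/
def mulFun (h : Circle → ℂ) : (Circle → ℂ) →ₗ[ℂ] (Circle → ℂ) where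
  toFun f := fun z => h z * f z
  map_add' f g := by funext z; simp [mul_add]
  map_smul' c f := by funext z; simp [Pi.smul_apply, smul_eq_mul]; ring

/-- The Miwa-shifted matrix measure `dM^{L,±}_w[μ](z) = (I - w z^{±1}) dμ(z)`
for a diagonal matrix `w = diag(w_1, …, w_m)`; `e = ±1`. -/
def miwaL (w : Fin m → ℂ) (e : ℤ) (μ : MatMeas m) : MatMeas m :=
  fun c d => (μ c d).comp (mulFun fun z => 1 - w c * (z : ℂ) ^ e)

/-- The Miwa-shifted matrix measure `dM^{R,±}_w[μ](z) = dμ(z) (I - w z^{±1})`. -/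
def miwaR (w : Fin m → ℂ) (e : ℤ) (μ : MatMeas m) : MatMeas m :=
  fun c d => (μ c d).comp (mulFun fun z => 1 - w d * (z : ℂ) ^ e)

/-- The scalar Miwa-shifted matrix measure `dM^{±}_w[μ](z) = (1 - w z^{±1}) dμ(z)`. -/
def miwaS (w : ℂ) (e : ℤ) (μ : MatMeas m) : MatMeas m :=
  fun c d => (μ c d).comp (mulFun fun z => 1 - w * (z : ℂ) ^ e)

/-- The deformed matrix measure `dμ_t(z) = exp(t z^{-1}) dμ(z)`. -/
def expShift (t : ℝ) (μ : MatMeas m) : MatMeas m :=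
  fun c d => (μ c d).comp (mulFun fun z => Complex.exp ((t : ℂ) * ((z : ℂ))⁻¹))

end MOLPUC

/-! Under quasi-definiteness a CMV Laurent polynomial is determined by being monic in its
leading CMV monomial and orthogonal to the earlier ones. Multiplying by `z^⌈l/2⌉` turns the
CMV monomials `z^{n_0}, …, z^{n_l}` into `1, z, …, z^l`, which identifies
`φ₁^{L,(2k)} = z^{-k} P^L_{1,2k}` and `φ₁^{L,(2k+1)} = z^{-k-1} (P^R_{2,2k+1})^*`. The same
uniqueness, for the Toeplitz moment matrix (a permutation of `g^L`), gives the Szegő recursions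
`P_{l+1} = z P_l + α^L_{1,l+1} Q_l` and `Q_{l+1} = Q_l + (α^R_{2,l+1})† z P_l` for
`P_l = P^L_{1,l}`, `Q_l = (P^R_{2,l})^*`. Eliminating along three such steps, from degree
`2k - 1` to `2k + 2`, gives the five-term relations. -/

namespace MOLPUC

variable {m : ℕ}

lemma nexp_two_mul (k : ℕ) : nexp (2 * k) = k := by
  unfold nexp; rw [if_neg (by omega)]; omega

lemma nexp_two_mul_add_one (k : ℕ) : nexp (2 * k + 1) = -((k : ℤ) + 1) := by
  unfold nexp; rw [if_pos (by omega)]; omega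

lemma nexp_injective : Function.Injective nexp := by
  intro i j h; unfold nexp at h; split_ifs at h <;> omega

lemma nexp_add_half_mem {j l : ℕ} (h : j < l) :
    0 ≤ nexp j + (l / 2 : ℕ) ∧ nexp j + (l / 2 : ℕ) < l := by
  unfold nexp; split <;> omega

/-- `j ↦ n_j + ⌊l/2⌋` permutes `Fin l`: the CMV exponents `n_0, …, n_{l-1}` fill the
interval `[-⌊l/2⌋, l - ⌊l/2⌋)`. -/
def cmvShift (l : ℕ) : Equiv.Perm (Fin l) :=
  Equiv.ofBijective
    (fun j => ⟨(nexp j + (l / 2 : ℕ)).toNat, by have := nexp_add_half_mem j.isLt; omega⟩)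
    (Finite.injective_iff_bijective.mp fun i j h => by
      have hi := nexp_add_half_mem i.isLt
      have hj := nexp_add_half_mem j.isLt
      have hij : nexp i = nexp j := by simp only [Fin.mk.injEq] at h; omega
      exact Fin.ext (nexp_injective hij))

lemma cmvShift_apply {l : ℕ} (j : Fin l) : ((cmvShift l j : ℕ) : ℤ) = nexp j + (l / 2 : ℕ) := by
  have := nexp_add_half_mem j.isLt
  simp only [cmvShift, Equiv.ofBijective_apply]
  omega

lemma sum_range_nexp {β : Type*} [AddCommMonoid β] (N : ℕ) (F : ℤ → β) :
    ∑ j ∈ range N, F (nexp j) = ∑ p ∈ range N, F (p - (N / 2 : ℕ)) := by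
  rw [← Fin.sum_univ_eq_sum_range (fun j => F (nexp j)),
    ← Fin.sum_univ_eq_sum_range (fun p => F (p - (N / 2 : ℕ))),
    ← Equiv.sum_comp (cmvShift N) (fun p : Fin N => F ((p : ℕ) - (N / 2 : ℕ)))]
  exact Finset.sum_congr rfl fun j _ => by rw [cmvShift_apply, add_sub_cancel_right]

/-- `rawMoment μ t = 2π c_{-t}`. -/
def rawMoment (μ : MatMeas m) (t : ℤ) : Mm m :=
  Matrix.of fun a b => μ a b fun z => (z : ℂ) ^ t / (Complex.I * z)

lemma mInt_zmon_eq_sum (μ : MatMeas m) (f : ℂ → Mm m) {s : Finset ℕ} {e : ℕ → ℤ}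
    {C : ℕ → Mm m} (n : ℤ) (hf : ∀ z : Circle, f z = ∑ j ∈ s, (z : ℂ) ^ e j • C j) :
    mInt μ f (zmon n) = ∑ j ∈ s, C j * rawMoment μ (e j + n) := by
  ext a b
  have hterm : ∀ c d, (fun z : Circle => f z a c * zmon n (z : ℂ) d b / (Complex.I * z))
      = ∑ j ∈ s, (C j a c * (1 : Mm m) d b) • fun z : Circle =>
          (z : ℂ) ^ (e j + n) / (Complex.I * z) := by
    intro c d
    funext z
    simp only [hf, zmon, Matrix.sum_apply, Matrix.smul_apply, smul_eq_mul, Finset.sum_apply,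
      Pi.smul_apply, Finset.sum_mul, Finset.sum_div, zpow_add₀ z.coe_ne_zero]
    exact Finset.sum_congr rfl fun j _ => by ring
  simp only [mInt, Matrix.of_apply, hterm, map_sum, map_smul, smul_eq_mul, Matrix.one_apply,
    mul_ite, mul_one, mul_zero, ite_mul, zero_mul, Finset.sum_ite_irrel, Finset.sum_const_zero,
    Finset.sum_ite_eq', Finset.mem_univ, if_true, Matrix.sum_apply, Matrix.mul_apply, rawMoment]
  rw [Finset.sum_comm]

lemma gL_eq_rawMoment (μ : MatMeas m) (i j : ℕ) : gL μ i j = rawMoment μ (nexp i - nexp j) := by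
  have hπ : ((2 * Real.pi : ℝ) : ℂ) ≠ 0 := by simp [Real.pi_ne_zero]
  have hone : (fun _ => (1 : Mm m)) = zmon 0 := funext fun z => by simp [zmon]
  simp only [gL, moment, smul_smul, mul_inv_cancel₀ hπ, one_smul, neg_sub, hone]
  simpa using mInt_zmon_eq_sum μ _ (s := range 1) (e := fun _ => nexp i - nexp j)
    (C := fun _ => 1) 0 fun z => by simp [zmon]

lemma eq_zero_of_sum_mul_eq_zero {g : ℕ → ℕ → Mm m} {l : ℕ} (hg : IsUnit (trunc g l))
    {C : Fin l → Mm m} (h : ∀ j : Fin l, ∑ i, C i * g i j = 0) : C = 0 := by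
  funext i
  ext a c
  have hrow : (fun p : Fin l × Fin m => C p.1 a p.2) ᵥ* trunc g l = 0 ᵥ* trunc g l := by
    funext q
    simpa [Matrix.vecMul, dotProduct, Fintype.sum_prod_type, Matrix.mul_apply, trunc,
      Matrix.sum_apply] using congrFun (congrFun (h q.1) a) q.2
  exact congrFun (Matrix.vecMul_injective_of_isUnit hg hrow) (i, c)

lemma sum_invBlk_mul {g : ℕ → ℕ → Mm m} {l : ℕ} (hg : IsUnit (trunc g l)) (i j : Fin l) :
    ∑ p, invBlk g l i p * g p j = if i = j then 1 else 0 := by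
  have h := Matrix.nonsing_inv_mul _ ((Matrix.isUnit_iff_isUnit_det _).1 hg)
  ext a b
  calc (∑ p, invBlk g l i p * g p j) a b
      = ∑ p, ∑ c, (trunc g l)⁻¹ (i, a) (p, c) * trunc g l (p, c) (j, b) := by
        simp only [Matrix.sum_apply, Matrix.mul_apply]; rfl
    _ = (1 : Matrix (Fin l × Fin m) (Fin l × Fin m) ℂ) (i, a) (j, b) := by
        rw [← h, Matrix.mul_apply, Fintype.sum_prod_type]
    _ = (if i = j then (1 : Mm m) else 0) a b := by
        by_cases hij : i = j <;> simp [Matrix.one_apply, hij]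

lemma QuasiDefinite.isUnit_trunc_gL {μ : MatMeas m} (hμ : QuasiDefinite μ) (l : ℕ) :
    IsUnit (trunc (gL μ) l) := by
  rcases Nat.eq_zero_or_pos l with rfl | hl
  · exact isUnit_of_subsingleton _
  · exact (hμ l hl).1

/-- The Toeplitz block matrix `(rawMoment μ (i - j))_{i,j < l}` is `g^L` with rows and columns
permuted by `cmvShift`. -/
lemma eq_zero_of_sum_mul_rawMoment_eq_zero {μ : MatMeas m} (hμ : QuasiDefinite μ) {l : ℕ}
    {C : Fin l → Mm m} (h : ∀ j : Fin l, ∑ i, C i * rawMoment μ (i - j) = 0) : C = 0 := by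
  have hσ : (fun i => C (cmvShift l i)) = 0 :=
    eq_zero_of_sum_mul_eq_zero (hμ.isUnit_trunc_gL l) fun j => by
      rw [← h (cmvShift l j),
        ← Equiv.sum_comp (cmvShift l) fun i => C i * rawMoment μ (i - (cmvShift l j : ℕ))]
      refine Finset.sum_congr rfl fun i _ => ?_
      rw [gL_eq_rawMoment, cmvShift_apply, cmvShift_apply, add_sub_add_right_eq_sub]
  funext i
  simpa using congrFun hσ ((cmvShift l).symm i)

lemma phiL_eq_of_orthogonal {μ : MatMeas m} {l : ℕ} (hg : IsUnit (trunc (gL μ) l))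
    {C : ℕ → Mm m} (hC : C l = 1) (horth : ∀ j : Fin l, ∑ i ∈ range (l + 1), C i * gL μ i j = 0)
    (z : ℂ) : phiL μ l z = ∑ i ∈ range (l + 1), chi i z • C i := by
  set A : Fin l → Mm m := fun j => ∑ i : Fin l, gL μ l i * invBlk (gL μ) l i j
  have hAg : ∀ q : Fin l, ∑ j, A j * gL μ j q = gL μ l q := fun q => by
    simp only [A, Finset.sum_mul, mul_assoc]
    rw [Finset.sum_comm]
    simp [← Finset.mul_sum, sum_invBlk_mul hg]
  have hCA : (fun j : Fin l => C j + A j) = 0 := eq_zero_of_sum_mul_eq_zero hg fun q => by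
    have h := horth q
    rw [sum_range_succ, hC, one_mul, ← Fin.sum_univ_eq_sum_range (fun i => C i * gL μ i q)] at h
    simpa only [add_mul, Finset.sum_add_distrib, hAg] using h
  have hCj : ∀ j : Fin l, C j = -A j := fun j => eq_neg_of_add_eq_zero_left (congrFun hCA j)
  rw [phiL, sum_range_succ, hC, ← Fin.sum_univ_eq_sum_range (fun i => chi i z • C i),
    Finset.sum_comm]
  simp only [hCj, A, smul_neg, Finset.smul_sum, Finset.sum_neg_distrib]
  abel

/-- Here `s = (l + 1) / 2 = ⌈l/2⌉` and `D` is the coefficient family of `z^s φ₁^{L,(l)}`: the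
monomials `z^{n_j}`, `j < l`, become `z^t` with `l % 2 ≤ t < l + l % 2`. -/
lemma phiL_eq_zpow_smul {μ : MatMeas m} {l : ℕ} (hg : IsUnit (trunc (gL μ) l)) {D : ℕ → Mm m}
    (hD : D (nexp l + ((l + 1) / 2 : ℕ)).toNat = 1)
    (horth : ∀ t : ℕ, l % 2 ≤ t → t < l + l % 2 →
      ∑ p ∈ range (l + 1), D p * rawMoment μ (p - t) = 0)
    {z : ℂ} (hz : z ≠ 0) :
    phiL μ l z = z ^ (-(((l + 1) / 2 : ℕ) : ℤ)) • ∑ p ∈ range (l + 1), z ^ p • D p := by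
  set s : ℕ := (l + 1) / 2
  rw [phiL_eq_of_orthogonal hg (C := fun i => D (nexp i + s).toNat) hD fun j => ?_]
  · simp only [chi]
    rw [sum_range_nexp (l + 1) fun t => z ^ t • D (t + s).toNat, Finset.smul_sum]
    refine Finset.sum_congr rfl fun p _ => ?_
    rw [sub_add_cancel, Int.toNat_natCast, smul_smul, ← zpow_natCast, ← zpow_add₀ hz,
      neg_add_eq_sub]
  · have hj := nexp_add_half_mem j.isLt
    simp only [gL_eq_rawMoment]
    rw [← horth (nexp j + s).toNat (by omega) (by omega),
      sum_range_nexp (l + 1) fun t => D (t + s).toNat * rawMoment μ (t - nexp j)]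
    refine Finset.sum_congr rfl fun p _ => ?_
    rw [sub_add_cancel, Int.toNat_natCast, Int.toNat_of_nonneg (by omega), sub_sub,
      add_comm]

lemma verb_eq (p : ℕ → Mm m) (l : ℕ) : verb p l = p 0 := by
  simp [verb, pev, Finset.sum_range_succ']

lemma IsSzL1.sum_mul_rawMoment {μ : MatMeas m} {P : ℕ → ℕ → Mm m} (hP : IsSzL1 μ P) {l j : ℕ}
    (hj : j < l) : ∑ i ∈ range (l + 1), P l i * rawMoment μ (i - j) = 0 := by
  rw [← (hP l).2 j hj, mInt_zmon_eq_sum μ _ (s := range (l + 1)) (e := fun i => (i : ℤ))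
    (C := P l) _ fun z => by simp [pev, zpow_natCast]]
  simp [sub_eq_add_neg]

/-- `(P l (l - i))ᴴ` are the coefficients of `pstar (P l) l`; on `𝕋`, `z̄ = z⁻¹` turns the
orthogonality of `P^R_{2,l}` to `z^0, …, z^{l-1}` into that of its reversal to `z^1, …, z^l`. -/
lemma IsSzR2.sum_mul_rawMoment {μ : MatMeas m} {P : ℕ → ℕ → Mm m} (hP : IsSzR2 μ P) {l j : ℕ}
    (h1 : 1 ≤ j) (h2 : j ≤ l) :
    ∑ i ∈ range (l + 1), (P l (l - i))ᴴ * rawMoment μ (i - j) = 0 := by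
  have hconj : ∀ z : Circle,
      (pev (P l) l z)ᴴ = ∑ i ∈ range (l + 1), (z : ℂ) ^ (-(i : ℤ)) • (P l i)ᴴ := fun z => by
    simp only [pev, Matrix.conjTranspose_sum, Matrix.conjTranspose_smul, star_pow,
      Complex.star_def, ← Circle.coe_inv_eq_conj, Circle.coe_inv, zpow_neg, zpow_natCast, inv_pow]
  rw [← (hP l).2 (l - j) (by omega), mInt_zmon_eq_sum μ _ _ hconj, ← Finset.sum_range_reflect]
  refine Finset.sum_congr rfl fun i hi => ?_
  rw [Finset.mem_range] at hi
  rw [show l + 1 - 1 - i = l - i by omega, show l - (l - i) = i by omega]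
  congr 2
  omega

section SzegoRecursion

variable {μ : MatMeas m} {PL1 PR2 : ℕ → ℕ → Mm m}

/-- The coefficients `1, …, l` of `P_{l+1} - z P_l - P_{l+1}(0) Q_l`, with `Q_l = (P^R_{2,l})^*`,
form a Toeplitz null vector: all three polynomials are orthogonal to `z^1, …, z^l`, and the
coefficients `0` and `l + 1` of the combination cancel. -/
lemma coeff_succ_of_szL1 (hμ : QuasiDefinite μ) (hPL1 : IsSzL1 μ PL1) (hPR2 : IsSzR2 μ PR2)
    {l i : ℕ} (hi : i < l) :
    PL1 (l + 1) (i + 1) = PL1 l i + PL1 (l + 1) 0 * (PR2 l (l - (i + 1)))ᴴ := by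
  have hnull := eq_zero_of_sum_mul_rawMoment_eq_zero hμ (l := l)
    (C := fun i => PL1 (l + 1) (i + 1) - PL1 l i - PL1 (l + 1) 0 * (PR2 l (l - (i + 1)))ᴴ)
    fun j => by
      have hA := hPL1.sum_mul_rawMoment (l := l + 1) (j := j + 1) (by omega)
      have hB := hPL1.sum_mul_rawMoment (l := l) (j := j) j.isLt
      have hC := hPR2.sum_mul_rawMoment (l := l) (j := j + 1) (by omega) (by omega)
      rw [sum_range_succ', sum_range_succ, (hPL1 (l + 1)).1.1] at hA
      rw [sum_range_succ, (hPL1 l).1.1] at hB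
      rw [sum_range_succ', Nat.sub_zero, (hPR2 l).1.1, Matrix.conjTranspose_one] at hC
      have hC' := congrArg (PL1 (l + 1) 0 * ·) hC
      simp only [mul_add, Finset.mul_sum, mul_zero, one_mul, ← mul_assoc] at hC'
      push_cast at hA hB hC'
      simp only [add_sub_add_right_eq_sub] at hA hC'
      rw [Fin.sum_univ_eq_sum_range (fun i => (PL1 (l + 1) (i + 1) - PL1 l i
        - PL1 (l + 1) 0 * (PR2 l (l - (i + 1)))ᴴ) * rawMoment μ (i - j))]
      simp only [sub_mul, Finset.sum_sub_distrib]
      linear_combination (norm := abel) hA - hB - hC'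
  exact sub_eq_zero.mp ((sub_sub _ _ _).symm.trans (congrFun hnull ⟨i, hi⟩))

lemma coeff_succ_of_szR2 (hμ : QuasiDefinite μ) (hPL1 : IsSzL1 μ PL1) (hPR2 : IsSzR2 μ PR2)
    {l i : ℕ} (hi : i < l) :
    (PR2 (l + 1) (l - i))ᴴ = (PR2 l (l - (i + 1)))ᴴ + (PR2 (l + 1) 0)ᴴ * PL1 l i := by
  have hnull := eq_zero_of_sum_mul_rawMoment_eq_zero hμ (l := l)
    (C := fun i => (PR2 (l + 1) (l - i))ᴴ - (PR2 l (l - (i + 1)))ᴴ - (PR2 (l + 1) 0)ᴴ * PL1 l i)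
    fun j => by
      have hA := hPR2.sum_mul_rawMoment (l := l + 1) (j := j + 1) (by omega) (by omega)
      have hB := hPR2.sum_mul_rawMoment (l := l) (j := j + 1) (by omega) (by omega)
      have hC := hPL1.sum_mul_rawMoment (l := l) (j := j) j.isLt
      rw [sum_range_succ', sum_range_succ, Nat.sub_self, Nat.sub_zero, (hPR2 (l + 1)).1.1,
        Matrix.conjTranspose_one] at hA
      rw [sum_range_succ', Nat.sub_zero, (hPR2 l).1.1, Matrix.conjTranspose_one] at hB
      rw [sum_range_succ, (hPL1 l).1.1] at hC
      have hC' := congrArg ((PR2 (l + 1) 0)ᴴ * ·) hC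
      simp only [mul_add, Finset.mul_sum, mul_zero, one_mul, ← mul_assoc] at hC'
      push_cast at hA hB hC'
      simp only [add_sub_add_right_eq_sub] at hA hB
      rw [Fin.sum_univ_eq_sum_range (fun i => ((PR2 (l + 1) (l - i))ᴴ - (PR2 l (l - (i + 1)))ᴴ
        - (PR2 (l + 1) 0)ᴴ * PL1 l i) * rawMoment μ (i - j))]
      simp only [sub_mul, Finset.sum_sub_distrib]
      linear_combination (norm := abel) hA - hB - hC'
  exact sub_eq_zero.mp ((sub_sub _ _ _).symm.trans (congrFun hnull ⟨i, hi⟩))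

lemma pev_succ_of_szego (hμ : QuasiDefinite μ) (hPL1 : IsSzL1 μ PL1) (hPR2 : IsSzR2 μ PR2)
    (l : ℕ) (z : ℂ) :
    pev (PL1 (l + 1)) (l + 1) z
      = z • pev (PL1 l) l z + verb (PL1 (l + 1)) (l + 1) * pstar (PR2 l) l z := by
  rw [verb_eq, pev, sum_range_succ', sum_range_succ, (hPL1 (l + 1)).1.1,
    Finset.sum_congr rfl fun i hi => by
      rw [coeff_succ_of_szL1 hμ hPL1 hPR2 (Finset.mem_range.mp hi)],
    pev, sum_range_succ, (hPL1 l).1.1, pstar, sum_range_succ', Nat.sub_zero, (hPR2 l).1.1,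
    Matrix.conjTranspose_one]
  simp only [smul_add, mul_add, Finset.sum_add_distrib, Finset.smul_sum, Finset.mul_sum,
    mul_smul_comm, smul_smul, ← pow_succ', mul_one, pow_zero, one_smul]
  abel

lemma pstar_succ_of_szego (hμ : QuasiDefinite μ) (hPL1 : IsSzL1 μ PL1) (hPR2 : IsSzR2 μ PR2)
    (l : ℕ) (z : ℂ) :
    pstar (PR2 (l + 1)) (l + 1) z
      = pstar (PR2 l) l z + (verb (PR2 (l + 1)) (l + 1))ᴴ * (z • pev (PL1 l) l z) := by
  rw [verb_eq, pstar, sum_range_succ', sum_range_succ, Nat.sub_self, Nat.sub_zero,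
    (hPR2 (l + 1)).1.1, Matrix.conjTranspose_one,
    Finset.sum_congr rfl fun i hi => by
      rw [Nat.add_sub_add_right, coeff_succ_of_szR2 hμ hPL1 hPR2 (Finset.mem_range.mp hi)],
    pstar, sum_range_succ', Nat.sub_zero, (hPR2 l).1.1, Matrix.conjTranspose_one,
    pev, sum_range_succ, (hPL1 l).1.1]
  simp only [smul_add, mul_add, Finset.sum_add_distrib, Finset.smul_sum, Finset.mul_sum,
    mul_smul_comm, smul_smul, ← pow_succ', mul_one, pow_zero, one_smul]
  abel

end SzegoRecursion

lemma phiL_two_mul {μ : MatMeas m} {PL1 : ℕ → ℕ → Mm m} (hμ : QuasiDefinite μ)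
    (hPL1 : IsSzL1 μ PL1) (k : ℕ) {z : ℂ} (hz : z ≠ 0) :
    phiL μ (2 * k) z = z ^ (-(k : ℤ)) • pev (PL1 (2 * k)) (2 * k) z := by
  have hs : (2 * k + 1) / 2 = k := by omega
  have h := phiL_eq_zpow_smul (hμ.isUnit_trunc_gL (2 * k)) (D := PL1 (2 * k))
    (by rw [nexp_two_mul, hs, show ((k : ℤ) + k).toNat = 2 * k by omega]; exact (hPL1 _).1.1)
    (fun t _ ht => hPL1.sum_mul_rawMoment (by omega)) hz
  rwa [hs] at h

lemma phiL_two_mul_add_one {μ : MatMeas m} {PR2 : ℕ → ℕ → Mm m} (hμ : QuasiDefinite μ)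
    (hPR2 : IsSzR2 μ PR2) (k : ℕ) {z : ℂ} (hz : z ≠ 0) :
    phiL μ (2 * k + 1) z = z ^ (-((k : ℤ) + 1)) • pstar (PR2 (2 * k + 1)) (2 * k + 1) z := by
  have hs : (2 * k + 1 + 1) / 2 = k + 1 := by omega
  have h := phiL_eq_zpow_smul (hμ.isUnit_trunc_gL (2 * k + 1))
    (D := fun p => (PR2 (2 * k + 1) (2 * k + 1 - p))ᴴ)
    (by
      rw [nexp_two_mul_add_one, hs, show (-((k : ℤ) + 1) + (k + 1 : ℕ)).toNat = 0 by omega,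
        Nat.sub_zero, (hPR2 _).1.1, Matrix.conjTranspose_one])
    (fun t ht1 ht2 => hPR2.sum_mul_rawMoment (by omega) (by omega)) hz
  rwa [hs, Nat.cast_succ] at h

lemma five_term_of_szego {R A : Type*} [CommRing R] [Ring A] [Algebra R A] (z w : R)
    {P₁ Q₁ P₂ Q₂ P₃ Q₃ P₄ φ₁ φ₂ φ₃ φ₄ a₂ a₃ a₄ b₂ b₃ : A}
    (hP₂ : P₂ = z • P₁ + a₂ * Q₁) (hQ₂ : Q₂ = Q₁ + b₂ * (z • P₁))
    (hP₃ : P₃ = z • P₂ + a₃ * Q₂) (hQ₃ : Q₃ = Q₂ + b₃ * (z • P₂))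
    (hP₄ : P₄ = z • P₃ + a₄ * Q₃)
    (hφ₁ : φ₁ = (w * z) • Q₁) (hφ₂ : φ₂ = (w * z) • P₂) (hφ₃ : φ₃ = w • Q₃)
    (hφ₄ : φ₄ = w • P₄) :
    z • φ₂ = -(a₃ * (1 - b₂ * a₂) * φ₁) - a₃ * b₂ * φ₂ - a₄ * φ₃ + φ₄ ∧
      z • φ₃ = (1 - b₃ * a₃) * (1 - b₂ * a₂) * φ₁ + (1 - b₃ * a₃) * b₂ * φ₂
        - b₃ * a₄ * φ₃ + b₃ * φ₄ := by
  subst hφ₁ hφ₂ hφ₃ hφ₄ hP₄ hQ₃ hP₃ hQ₂ hP₂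
  constructor <;>
  · simp only [mul_add, mul_sub, sub_mul, smul_add, smul_sub, mul_smul_comm, smul_smul,
      mul_assoc, one_mul, mul_one]
    module

end MOLPUC

open MOLPUC in
theorem left_CMV_five_term_recursion_general
    (m : ℕ) (μ : MatMeas m) (hμ : QuasiDefinite μ)
    (PL1 PR2 : ℕ → ℕ → Mm m)
    (hPL1 : IsSzL1 μ PL1) (hPR2 : IsSzR2 μ PR2) :
    ∀ (k : ℕ) (hk : 1 ≤ k), ∀ z : ℂ, z ≠ 0 →
      (z • phiL μ (2 * k) z
        = -(verb (PL1 (2 * k + 1)) (2 * k + 1)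
              * (1 - (verb (PR2 (2 * k)) (2 * k))ᴴ * verb (PL1 (2 * k)) (2 * k))
              * phiL μ (2 * k - 1) z)
          - verb (PL1 (2 * k + 1)) (2 * k + 1) * (verb (PR2 (2 * k)) (2 * k))ᴴ
              * phiL μ (2 * k) z
          - verb (PL1 (2 * k + 2)) (2 * k + 2) * phiL μ (2 * k + 1) z
          + phiL μ (2 * k + 2) z) ∧
      (z • phiL μ (2 * k + 1) z
        = (1 - (verb (PR2 (2 * k + 1)) (2 * k + 1))ᴴ * verb (PL1 (2 * k + 1)) (2 * k + 1))
              * (1 - (verb (PR2 (2 * k)) (2 * k))ᴴ * verb (PL1 (2 * k)) (2 * k))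
              * phiL μ (2 * k - 1) z
          + (1 - (verb (PR2 (2 * k + 1)) (2 * k + 1))ᴴ * verb (PL1 (2 * k + 1)) (2 * k + 1))
              * (verb (PR2 (2 * k)) (2 * k))ᴴ * phiL μ (2 * k) z
          - (verb (PR2 (2 * k + 1)) (2 * k + 1))ᴴ * verb (PL1 (2 * k + 2)) (2 * k + 2)
              * phiL μ (2 * k + 1) z
          + (verb (PR2 (2 * k + 1)) (2 * k + 1))ᴴ * phiL μ (2 * k + 2) z) := by
  intro k hk z hz
  obtain ⟨j, rfl⟩ := Nat.exists_eq_add_of_le' hk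
  have hw : z ^ (-((j : ℤ) + 1)) = z ^ (-((j : ℤ) + 2)) * z := by
    rw [← zpow_add_one₀ hz]; ring_nf
  have hφ₁ := phiL_two_mul_add_one hμ hPR2 j hz
  have hφ₂ := phiL_two_mul hμ hPL1 (j + 1) hz
  have hφ₃ := phiL_two_mul_add_one hμ hPR2 (j + 1) hz
  have hφ₄ := phiL_two_mul hμ hPL1 (j + 2) hz
  push_cast at hφ₂ hφ₃ hφ₄
  rw [hw] at hφ₁ hφ₂
  rw [show -((j : ℤ) + 1 + 1) = -((j : ℤ) + 2) by ring] at hφ₃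
  rw [show 2 * (j + 1) - 1 = 2 * j + 1 by omega]
  exact five_term_of_szego z _ (pev_succ_of_szego hμ hPL1 hPR2 _ z)
    (pstar_succ_of_szego hμ hPL1 hPR2 _ z) (pev_succ_of_szego hμ hPL1 hPR2 _ z)
    (pstar_succ_of_szego hμ hPL1 hPR2 _ z) (pev_succ_of_szego hμ hPL1 hPR2 _ z) hφ₁ hφ₂ hφ₃ hφ₄

open MOLPUC in
/-- five-term recursion relations for the left CMV matrix Laurent
polynomials. -/
theorem left_CMV_five_term_recursion
    (m : ℕ) (hm : 1 ≤ m) (μ : MatMeas m) (hμ : QuasiDefinite μ)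
    (PL1 PR2 : ℕ → ℕ → Mm m)
    (hPL1 : IsSzL1 μ PL1) (hPR2 : IsSzR2 μ PR2) :
    ∀ (k : ℕ) (hk : 1 ≤ k), ∀ z : ℂ, z ≠ 0 →
      (z • phiL μ (2 * k) z
        = -(verb (PL1 (2 * k + 1)) (2 * k + 1)
              * (1 - (verb (PR2 (2 * k)) (2 * k))ᴴ * verb (PL1 (2 * k)) (2 * k))
              * phiL μ (2 * k - 1) z)
          - verb (PL1 (2 * k + 1)) (2 * k + 1) * (verb (PR2 (2 * k)) (2 * k))ᴴ
              * phiL μ (2 * k) z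
          - verb (PL1 (2 * k + 2)) (2 * k + 2) * phiL μ (2 * k + 1) z
          + phiL μ (2 * k + 2) z) ∧
      (z • phiL μ (2 * k + 1) z
        = (1 - (verb (PR2 (2 * k + 1)) (2 * k + 1))ᴴ * verb (PL1 (2 * k + 1)) (2 * k + 1))
              * (1 - (verb (PR2 (2 * k)) (2 * k))ᴴ * verb (PL1 (2 * k)) (2 * k))
              * phiL μ (2 * k - 1) z
          + (1 - (verb (PR2 (2 * k + 1)) (2 * k + 1))ᴴ * verb (PL1 (2 * k + 1)) (2 * k + 1))
              * (verb (PR2 (2 * k)) (2 * k))ᴴ * phiL μ (2 * k) z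
          - (verb (PR2 (2 * k + 1)) (2 * k + 1))ᴴ * verb (PL1 (2 * k + 2)) (2 * k + 2)
              * phiL μ (2 * k + 1) z
          + (verb (PR2 (2 * k + 1)) (2 * k + 1))ᴴ * phiL μ (2 * k + 2) z) :=
  left_CMV_five_term_recursion_general m μ hμ PL1 PR2 hPL1 hPR2
end
end

section
/- Assume μ is quasi-definite. Then the Christoffel–Darboux kernels have the reproducing property: for every l ≥ 0 and all nonzero v, y ∈ ℂ, k^{L,[l]}(v,y) = ∮_𝕋 k^{L,[l]}(v,z) dμ(z)/(iz) k^{L,[l]}(z,y) and k^{R,[l]}(y,v) = ∮_𝕋 k^{R,[l]}(y,z) dμ(z)/(iz) k^{R,[l]}(z,v), where in each integrand the integration variable z runs over 𝕋 and occupies the second slot of the left factor and the first slot of the right factor. -/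
noncomputable section

open scoped Matrix
open Finset

namespace MOLPUC

variable {m : ℕ}

/-!
The CMV polynomials are biorthogonal for the pairing `mInt μ`:
`∮ φ₁^{L,(j)} dμ/(iz) ψ^{L,(k)} = δ_{jk} I` and `∮ ψ^{R,(j)} dμ/(iz) φ₁^{R,(k)} = δ_{jk} I`.
The coefficient row `R_l (g^{[l]})⁻¹` is exactly what makes `φ₁^{(l)}` annihilate the monomials
`χ^{(p)}`, `p < l`, against which the moments are taken, and dually for `ψ^{(l)}`; pairing the two
polynomials of index `l` leaves the Schur complement `D_l`, which is invertible because `g^{[l]}`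
and `g^{[l+1]}` are, and is cancelled by the normalisation `D_l⁻¹`. Expanding both kernels by
bilinearity, biorthogonality collapses the double sum in the integral to the kernel itself.
-/

lemma mInt_congr (μ : MatMeas m) {f f' g g' : ℂ → Mm m}
    (hf : ∀ z : Circle, f z = f' z) (hg : ∀ z : Circle, g z = g' z) :
    mInt μ f g = mInt μ f' g' := by
  ext a b
  simp only [mInt, Matrix.of_apply, hf, hg]

lemma mInt_transpose (μ : MatMeas m) (f g : ℂ → Mm m) :
    (mInt μ f g)ᵀ = mInt (fun c d => μ d c) (fun z => (g z)ᵀ) (fun z => (f z)ᵀ) := by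
  ext a b
  simp only [mInt, Matrix.transpose_apply, Matrix.of_apply, mul_comm (f _ _ _)]
  exact Finset.sum_comm

lemma mInt_add_left (μ : MatMeas m) (f f' g : ℂ → Mm m) :
    mInt μ (f + f') g = mInt μ f g + mInt μ f' g := by
  ext a b
  simp only [mInt, Matrix.of_apply, Matrix.add_apply, Pi.add_apply, add_mul, add_div,
    ← Finset.sum_add_distrib, ← map_add]
  rfl

lemma mInt_add_right (μ : MatMeas m) (f g g' : ℂ → Mm m) :
    mInt μ f (g + g') = mInt μ f g + mInt μ f g' := by
  rw [← Matrix.transpose_inj, Matrix.transpose_add, mInt_transpose, mInt_transpose,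
    mInt_transpose]
  exact mInt_add_left _ _ _ _

lemma _root_.LinearMap.apply_fun_sum_mul {R X ι : Type*} [Semiring R] (ℓ : (X → R) →ₗ[R] R)
    (s : Finset ι) (w : ι → R) (h : ι → X → R) :
    ℓ (fun z => ∑ i ∈ s, w i * h i z) = ∑ i ∈ s, w i * ℓ (h i) := by
  rw [← Finset.sum_fn, map_sum]
  simp only [← smul_eq_mul, ← map_smul]
  rfl

lemma mInt_const_mul_left (μ : MatMeas m) (M : Mm m) (f g : ℂ → Mm m) :
    mInt μ (fun z => M * f z) g = M * mInt μ f g := by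
  ext a b
  simp only [mInt, Matrix.of_apply, Matrix.mul_apply, Finset.sum_mul, Finset.sum_div, mul_assoc,
    mul_div_assoc, LinearMap.apply_fun_sum_mul, Finset.mul_sum]
  exact (Finset.sum_congr rfl fun c _ => Finset.sum_comm).trans Finset.sum_comm

lemma mInt_mul_const_right (μ : MatMeas m) (M : Mm m) (f g : ℂ → Mm m) :
    mInt μ f (fun z => g z * M) = mInt μ f g * M := by
  rw [← Matrix.transpose_inj, mInt_transpose, Matrix.transpose_mul, mInt_transpose]
  simp only [Matrix.transpose_mul]
  exact mInt_const_mul_left _ Mᵀ _ _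

def mIntBilin (μ : MatMeas m) : (ℂ → Mm m) →ₗ[ℂ] (ℂ → Mm m) →ₗ[ℂ] Mm m :=
  LinearMap.mk₂ ℂ (mInt μ) (mInt_add_left μ)
    (fun c f g => by simpa [Pi.smul_def] using mInt_const_mul_left μ (c • 1) f g)
    (mInt_add_right μ)
    (fun c f g => by simpa [Pi.smul_def] using mInt_mul_const_right μ (c • 1) f g)

lemma mInt_sub_left (μ : MatMeas m) (f f' g : ℂ → Mm m) :
    mInt μ (fun z => f z - f' z) g = mInt μ f g - mInt μ f' g :=
  LinearMap.map_sub₂ (mIntBilin μ) f f' g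

lemma mInt_sub_right (μ : MatMeas m) (f g g' : ℂ → Mm m) :
    mInt μ f (fun z => g z - g' z) = mInt μ f g - mInt μ f g' :=
  map_sub (mIntBilin μ f) g g'

lemma mInt_sum_left {ι : Type*} (μ : MatMeas m) (s : Finset ι) (F : ι → ℂ → Mm m)
    (g : ℂ → Mm m) : mInt μ (fun z => ∑ i ∈ s, F i z) g = ∑ i ∈ s, mInt μ (F i) g := by
  rw [← Finset.sum_fn]
  exact LinearMap.map_sum₂ (mIntBilin μ) s F g

lemma mInt_sum_right {ι : Type*} (μ : MatMeas m) (s : Finset ι) (f : ℂ → Mm m)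
    (G : ι → ℂ → Mm m) : mInt μ f (fun z => ∑ i ∈ s, G i z) = ∑ i ∈ s, mInt μ f (G i) := by
  rw [← Finset.sum_fn]
  exact map_sum (mIntBilin μ f) G s

lemma mInt_smul_const_left (μ : MatMeas m) (p : ℂ → ℂ) (M : Mm m) (g : ℂ → Mm m) :
    mInt μ (fun z => p z • M) g = M * mInt μ (fun z => p z • 1) g := by
  simp only [← mInt_const_mul_left, Matrix.mul_smul, mul_one]

lemma mInt_smul_const_right (μ : MatMeas m) (p : ℂ → ℂ) (M : Mm m) (f : ℂ → Mm m) :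
    mInt μ f (fun z => p z • M) = mInt μ f (fun z => p z • 1) * M := by
  simp only [← mInt_mul_const_right, Matrix.smul_mul, one_mul]

lemma mInt_smul_right_eq_smul_left (μ : MatMeas m) (p : ℂ → ℂ) (f g : ℂ → Mm m) :
    mInt μ f (fun z => p z • g z) = mInt μ (fun z => p z • f z) g := by
  ext a b
  simp only [mInt, Matrix.of_apply, Matrix.smul_apply, smul_eq_mul, mul_left_comm, mul_assoc]

lemma mInt_smul_one_eq_moment (μ : MatMeas m) (n : ℤ) {p q : ℂ → ℂ}
    (h : ∀ z : Circle, q z * p z = (z : ℂ) ^ (-n)) :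
    mInt μ (fun z => p z • 1) (fun z => q z • 1) = ((2 * Real.pi : ℝ) : ℂ) • moment μ n := by
  have h2π : ((2 * Real.pi : ℝ) : ℂ) ≠ 0 := by simp [Real.pi_ne_zero]
  rw [moment, smul_inv_smul₀ h2π, mInt_smul_right_eq_smul_left]
  exact mInt_congr μ (fun z => by simp only [smul_smul, h, zmon]) fun _ => rfl

lemma mInt_chi_chi_inv (μ : MatMeas m) (a b : ℕ) :
    mInt μ (fun z => chi a z • 1) (fun z => chi b z⁻¹ • 1) = gL μ a b :=
  mInt_smul_one_eq_moment μ _ fun z => by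
    rw [chi, chi, inv_zpow', ← zpow_add₀ (Circle.coe_ne_zero z)]
    ring_nf

lemma mInt_chi_inv_chi (μ : MatMeas m) (a b : ℕ) :
    mInt μ (fun z => chi a z⁻¹ • 1) (fun z => chi b z • 1) = gR μ a b :=
  mInt_smul_one_eq_moment μ _ fun z => by
    rw [chi, chi, inv_zpow', ← zpow_add₀ (Circle.coe_ne_zero z)]
    ring_nf

lemma isUnit_trunc_zero (g : ℕ → ℕ → Mm m) : IsUnit (trunc g 0) := isUnit_of_subsingleton _

/-- `Matrix.comp` turns this into `trunc g l`, and `Matrix.of (invBlk g l)` into `(trunc g l)⁻¹`,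
both definitionally. -/
def truncBlocks (g : ℕ → ℕ → Mm m) (l : ℕ) : Matrix (Fin l) (Fin l) (Mm m) :=
  Matrix.of fun i j => g i j

lemma invBlk_mul_truncBlocks {g : ℕ → ℕ → Mm m} {l : ℕ} (hU : IsUnit (trunc g l)) :
    Matrix.of (invBlk g l) * truncBlocks g l = 1 := by
  apply (Matrix.compRingEquiv (Fin l) (Fin m) ℂ).injective
  rw [map_mul, map_one]
  exact Matrix.nonsing_inv_mul _ ((Matrix.isUnit_iff_isUnit_det _).mp hU)

lemma truncBlocks_mul_invBlk {g : ℕ → ℕ → Mm m} {l : ℕ} (hU : IsUnit (trunc g l)) :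
    truncBlocks g l * Matrix.of (invBlk g l) = 1 := by
  apply (Matrix.compRingEquiv (Fin l) (Fin m) ℂ).injective
  rw [map_mul, map_one]
  exact Matrix.mul_nonsing_inv _ ((Matrix.isUnit_iff_isUnit_det _).mp hU)

lemma sum_sum_mul_invBlk_mul_col {g : ℕ → ℕ → Mm m} {l : ℕ} (hU : IsUnit (trunc g l))
    (r : ℕ) (p : Fin l) :
    ∑ i : Fin l, ∑ i' : Fin l, g r i * invBlk g l i i' * g i' p = g r p := by
  have hinv (i : Fin l) : ∑ i' : Fin l, invBlk g l i i' * g i' p = if i = p then 1 else 0 := by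
    simpa [Matrix.mul_apply, truncBlocks, Matrix.one_apply] using
      congrFun (congrFun (invBlk_mul_truncBlocks hU) i) p
  simp only [mul_assoc, ← Finset.mul_sum, hinv, mul_ite, mul_one, mul_zero, Finset.sum_ite_eq',
    Finset.mem_univ, if_true]

lemma sum_sum_mul_invBlk_mul_row {g : ℕ → ℕ → Mm m} {l : ℕ} (hU : IsUnit (trunc g l))
    (i : Fin l) (r : ℕ) :
    ∑ p : Fin l, ∑ q : Fin l, g i p * (invBlk g l p q * g q r) = g i r := by
  have hinv (q : Fin l) : ∑ p : Fin l, g i p * invBlk g l p q = if i = q then 1 else 0 := by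
    simpa [Matrix.mul_apply, truncBlocks, Matrix.one_apply] using
      congrFun (congrFun (truncBlocks_mul_invBlk hU) i) q
  rw [Finset.sum_comm]
  simp only [← mul_assoc, ← Finset.sum_mul, hinv, ite_mul, one_mul, zero_mul, Finset.sum_ite_eq,
    Finset.mem_univ, if_true]

def schurComplement (g : ℕ → ℕ → Mm m) (l : ℕ) : Mm m :=
  g l l - ∑ i : Fin l, ∑ j : Fin l, g l i * invBlk g l i j * g j l

def lastBlockEquiv (l : ℕ) : (Fin l × Fin m) ⊕ Fin m ≃ Fin (l + 1) × Fin m :=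
  (Equiv.sumCongr (Equiv.refl _) (Equiv.uniqueProd (Fin m) (Fin 1)).symm).trans <|
    (Equiv.sumProdDistrib (Fin l) (Fin 1) (Fin m)).symm.trans <|
      Equiv.prodCongr finSumFinEquiv (Equiv.refl _)

lemma trunc_succ_submatrix_lastBlockEquiv (g : ℕ → ℕ → Mm m) (l : ℕ) :
    (trunc g (l + 1)).submatrix (lastBlockEquiv l) (lastBlockEquiv l) =
      Matrix.fromBlocks (trunc g l) (Matrix.of fun (p : Fin l × Fin m) b => g p.1 l p.2 b)
        (Matrix.of fun a (q : Fin l × Fin m) => g l q.1 a q.2) (g l l) := by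
  ext (⟨i, a⟩ | a) (⟨j, b⟩ | b) <;> simp [lastBlockEquiv, trunc]

lemma isUnit_schurComplement {g : ℕ → ℕ → Mm m} {l : ℕ} (hl : IsUnit (trunc g l))
    (hl1 : IsUnit (trunc g (l + 1))) : IsUnit (schurComplement g l) := by
  have := (trunc g l).invertibleOfIsUnitDet ((Matrix.isUnit_iff_isUnit_det _).mp hl)
  have hschur : schurComplement g l =
      g l l - Matrix.of (fun a (q : Fin l × Fin m) => g l q.1 a q.2) * ⅟(trunc g l) *
        Matrix.of fun (p : Fin l × Fin m) b => g p.1 l p.2 b := by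
    ext a b
    simp only [schurComplement, Matrix.invOf_eq_nonsing_inv, Matrix.sub_apply, Matrix.sum_apply,
      Matrix.mul_apply, Fintype.sum_prod_type, invBlk, Matrix.of_apply, Finset.sum_mul]
    rw [Finset.sum_comm]
    exact congrArg _ (Finset.sum_congr rfl fun _ _ => Finset.sum_comm)
  rw [hschur, ← Matrix.isUnit_fromBlocks_iff_of_invertible₁₁,
    ← trunc_succ_submatrix_lastBlockEquiv, Matrix.isUnit_submatrix_equiv]
  exact hl1

/-- For `(g, α) = (gL μ, chi)` this is `phiL μ`, for `(gR μ, chi (·⁻¹))` it is `psiR μ`. -/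
def cmvPoly (g : ℕ → ℕ → Mm m) (α : ℕ → ℂ → ℂ) (l : ℕ) (z : ℂ) : Mm m :=
  α l z • (1 : Mm m) - ∑ i : Fin l, ∑ j : Fin l, α j z • (g l i * invBlk g l i j)

/-- For `(g, β) = (gL μ, chi (·⁻¹))` this is `psiL μ` before normalisation by `(DL μ l)⁻¹`,
for `(gR μ, chi)` it is `phiR μ` before normalisation by `(DR μ l)⁻¹`. -/
def cmvDualPoly (g : ℕ → ℕ → Mm m) (β : ℕ → ℂ → ℂ) (l : ℕ) (z : ℂ) : Mm m :=
  β l z • (1 : Mm m) - ∑ i : Fin l, ∑ j : Fin l, β i z • (invBlk g l i j * g j l)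

section Biorthogonality

variable (μ : MatMeas m) {g : ℕ → ℕ → Mm m} {α β : ℕ → ℂ → ℂ}
  (hg : ∀ a b, mInt μ (fun z => α a z • 1) (fun z => β b z • 1) = g a b)
  (hU : ∀ l, IsUnit (trunc g l))
include hg

lemma mInt_cmvPoly_monomial (l p : ℕ) :
    mInt μ (cmvPoly g α l) (fun z => β p z • 1) =
      g l p - ∑ i : Fin l, ∑ j : Fin l, g l i * invBlk g l i j * g j p := by
  unfold cmvPoly
  simp only [mInt_sub_left, mInt_sum_left, mInt_smul_const_left μ _ (_ * _), hg]

lemma mInt_monomial_cmvDualPoly (p l : ℕ) :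
    mInt μ (fun z => α p z • 1) (cmvDualPoly g β l) =
      g p l - ∑ i : Fin l, ∑ j : Fin l, g p i * (invBlk g l i j * g j l) := by
  unfold cmvDualPoly
  simp only [mInt_sub_right, mInt_sum_right, mInt_smul_const_right μ _ (_ * _), hg]

include hU

lemma mInt_cmvPoly_monomial_of_lt {l p : ℕ} (hp : p < l) :
    mInt μ (cmvPoly g α l) (fun z => β p z • 1) = 0 := by
  rw [mInt_cmvPoly_monomial μ hg, sum_sum_mul_invBlk_mul_col (hU l) l ⟨p, hp⟩, sub_self]

lemma mInt_monomial_cmvDualPoly_of_lt {l p : ℕ} (hp : p < l) :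
    mInt μ (fun z => α p z • 1) (cmvDualPoly g β l) = 0 := by
  rw [mInt_monomial_cmvDualPoly μ hg, sum_sum_mul_invBlk_mul_row (hU l) ⟨p, hp⟩ l, sub_self]

lemma mInt_cmvPoly_cmvDualPoly (j k : ℕ) :
    mInt μ (cmvPoly g α j) (cmvDualPoly g β k) = if j = k then schurComplement g j else 0 := by
  rcases lt_or_ge j k with hjk | hkj
  · have hzero (i : Fin j) : mInt μ (fun z => α i z • 1) (cmvDualPoly g β k) = 0 :=
      mInt_monomial_cmvDualPoly_of_lt μ hg hU (i.2.trans hjk)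
    unfold cmvPoly
    simp only [mInt_sub_left, mInt_sum_left, mInt_smul_const_left μ _ (_ * _), hzero,
      mInt_monomial_cmvDualPoly_of_lt μ hg hU hjk, mul_zero, Finset.sum_const_zero, sub_zero,
      if_neg hjk.ne]
  · have hzero (i : Fin k) : mInt μ (cmvPoly g α j) (fun z => β i z • 1) = 0 :=
      mInt_cmvPoly_monomial_of_lt μ hg hU (i.2.trans_le hkj)
    unfold cmvDualPoly
    simp only [mInt_sub_right, mInt_sum_right, mInt_smul_const_right μ _ (_ * _), hzero,
      zero_mul, Finset.sum_const_zero, sub_zero]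
    rcases hkj.lt_or_eq with hkj | rfl
    · rw [mInt_cmvPoly_monomial_of_lt μ hg hU hkj, if_neg hkj.ne']
    · rw [mInt_cmvPoly_monomial μ hg, if_pos rfl, schurComplement]

lemma mInt_cmvPoly_cmvDualPoly_mul_inv (j k : ℕ) :
    mInt μ (cmvPoly g α j) (fun z => cmvDualPoly g β k z * (schurComplement g k)⁻¹) =
      if j = k then 1 else 0 := by
  rw [mInt_mul_const_right, mInt_cmvPoly_cmvDualPoly μ hg hU]
  split_ifs with hjk
  · subst hjk
    exact Matrix.mul_nonsing_inv _ <|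
      (Matrix.isUnit_iff_isUnit_det _).mp (isUnit_schurComplement (hU j) (hU (j + 1)))
  · exact zero_mul _

end Biorthogonality

namespace QuasiDefinite

variable {μ : MatMeas m} (hμ : QuasiDefinite μ)
include hμ

lemma isUnit_trunc_gL_s14 (l : ℕ) : IsUnit (trunc (gL μ) l) := by
  rcases Nat.eq_zero_or_pos l with rfl | hl
  exacts [isUnit_trunc_zero _, (hμ l hl).1]

lemma isUnit_trunc_gR (l : ℕ) : IsUnit (trunc (gR μ) l) := by
  rcases Nat.eq_zero_or_pos l with rfl | hl
  exacts [isUnit_trunc_zero _, (hμ l hl).2]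

lemma mInt_phiL_psiL (j k : ℕ) :
    mInt μ (phiL μ j) (psiL μ k) = if j = k then 1 else 0 :=
  mInt_cmvPoly_cmvDualPoly_mul_inv μ (mInt_chi_chi_inv μ) hμ.isUnit_trunc_gL_s14 j k

lemma mInt_psiR_phiR (j k : ℕ) :
    mInt μ (psiR μ j) (phiR μ k) = if j = k then 1 else 0 :=
  mInt_cmvPoly_cmvDualPoly_mul_inv μ (mInt_chi_inv_chi μ) hμ.isUnit_trunc_gR j k

end QuasiDefinite

lemma mInt_sum_mul_sum_mul_of_biorthogonal (μ : MatMeas m) {P Q : ℕ → ℂ → Mm m}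
    (h : ∀ j k, mInt μ (P j) (Q k) = if j = k then 1 else 0) (l : ℕ) (v y : ℂ) :
    mInt μ (fun z => ∑ j ∈ range l, Q j v * P j z) (fun z => ∑ k ∈ range l, Q k z * P k y) =
      ∑ j ∈ range l, Q j v * P j y := by
  rw [mInt_sum_left]
  refine Finset.sum_congr rfl fun j hj => ?_
  simp only [mInt_sum_right, mInt_const_mul_left, mInt_mul_const_right, h, mul_ite, ite_mul,
    mul_one, mul_zero, zero_mul, Finset.sum_ite_eq, if_pos hj]

end MOLPUC

open MOLPUC in
theorem Christoffel_Darboux_reproducing_property_general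
    (m : ℕ) (μ : MatMeas m) (hμ : QuasiDefinite μ) :
    ∀ l : ℕ, ∀ v y : ℂ, v ≠ 0 → y ≠ 0 →
      kL μ l v y = mInt μ (fun z => kL μ l v z) (fun z => kL μ l z y) ∧
      kR μ l y v = mInt μ (fun z => kR μ l y z) (fun z => kR μ l z v) :=
  fun l v y _ _ =>
    ⟨(mInt_sum_mul_sum_mul_of_biorthogonal μ hμ.mInt_phiL_psiL l v y).symm,
      (mInt_sum_mul_sum_mul_of_biorthogonal μ hμ.mInt_psiR_phiR l y v).symm⟩

open MOLPUC in
/-- the reproducing property of the Christoffel–Darboux kernels. -/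
theorem Christoffel_Darboux_reproducing_property
    (m : ℕ) (hm : 1 ≤ m) (μ : MatMeas m) (hμ : QuasiDefinite μ) :
    ∀ l : ℕ, ∀ v y : ℂ, v ≠ 0 → y ≠ 0 →
      kL μ l v y = mInt μ (fun z => kL μ l v z) (fun z => kL μ l z y) ∧
      kR μ l y v = mInt μ (fun z => kR μ l y z) (fun z => kR μ l z v) :=
  Christoffel_Darboux_reproducing_property_general m μ hμ
end
end
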